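/- arXiv:1208.4196 — 6 statements merged into one kernel-verified Lean document; each statement's English description precedes it below -/
import Mathlib

section
/- For all nonnegative integers m and n, the quantity S(m,n) = (2m)!(2n)! / (m! n! (m+n)!) is an integer. -/
lemma super_catalan_div_ineq (k m n : ℕ) (hk : 0 < k) :
    m / k + n / k + (m + n) / k ≤ 2 * m / k + 2 * n / k := by
  obtain ⟨q1, r1, hr1, rfl⟩ : ∃ q r, r < k ∧ m = k * q + r :=
    ⟨m / k, m % k, Nat.mod_lt _ hk, (Nat.div_add_mod m k).symm⟩
  obtain ⟨q2, r2, hr2, rfl⟩ : ∃ q r, r < k ∧ n = k * q + r :=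
    ⟨n / k, n % k, Nat.mod_lt _ hk, (Nat.div_add_mod n k).symm⟩
  have h1 : (k * q1 + r1) / k = q1 + r1 / k := Nat.mul_add_div hk _ _
  have h2 : (k * q2 + r2) / k = q2 + r2 / k := Nat.mul_add_div hk _ _
  have h3 : (k * q1 + r1 + (k * q2 + r2)) / k = (q1 + q2) + (r1 + r2) / k := by
    rw [show k * q1 + r1 + (k * q2 + r2) = k * (q1 + q2) + (r1 + r2) by ring]
    exact Nat.mul_add_div hk _ _
  have h4 : 2 * (k * q1 + r1) / k = 2 * q1 + 2 * r1 / k := by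
    rw [show 2 * (k * q1 + r1) = k * (2 * q1) + 2 * r1 by ring]
    exact Nat.mul_add_div hk _ _
  have h5 : 2 * (k * q2 + r2) / k = 2 * q2 + 2 * r2 / k := by
    rw [show 2 * (k * q2 + r2) = k * (2 * q2) + 2 * r2 by ring]
    exact Nat.mul_add_div hk _ _
  rw [h1, h2, h3, h4, h5, Nat.div_eq_of_lt hr1, Nat.div_eq_of_lt hr2]
  have key : (r1 + r2) / k ≤ 2 * r1 / k + 2 * r2 / k := by
    rcases Nat.lt_or_ge (r1 + r2) k with h | h
    · rw [Nat.div_eq_of_lt h]; exact Nat.zero_le _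
    · have hA : (r1 + r2) / k ≤ 1 := by
        rw [Nat.div_le_iff_le_mul_add_pred hk]; omega
      have hB : 1 ≤ 2 * r1 / k + 2 * r2 / k := by
        rcases Nat.lt_or_ge r1 r2 with h' | h'
        · have : 1 ≤ 2 * r2 / k := by rw [Nat.le_div_iff_mul_le hk]; omega
          exact this.trans (Nat.le_add_left _ _)
        · have : 1 ≤ 2 * r1 / k := by rw [Nat.le_div_iff_mul_le hk]; omega
          exact this.trans (Nat.le_add_right _ _)
      exact hA.trans hB
  calc q1 + 0 + (q2 + 0) + (q1 + q2 + (r1 + r2) / k)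
      ≤ q1 + 0 + (q2 + 0) + (q1 + q2 + (2 * r1 / k + 2 * r2 / k)) := by
        exact Nat.add_le_add_left (Nat.add_le_add_left key _) _
    _ = 2 * q1 + 2 * r1 / k + (2 * q2 + 2 * r2 / k) := by ring

/-- The super Catalan numbers: `(2m)! (2n)! / (m! n! (m+n)!)` are integers,
i.e. `m! * n! * (m+n)!` divides `(2m)! * (2n)!`. -/
theorem super_catalan_integer (m n : ℕ) :
    (Nat.factorial m * Nat.factorial n * Nat.factorial (m + n)) ∣
      (Nat.factorial (2 * m) * Nat.factorial (2 * n)) := by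
  rw [← Nat.factorization_le_iff_dvd (by positivity) (by positivity)]
  intro p
  by_cases hp : p.Prime
  · haveI : Fact p.Prime := ⟨hp⟩
    set b := Nat.log p (2 * (m + n)) + 1 with hbdef
    have hbm : Nat.log p m < b := lt_of_le_of_lt (Nat.log_mono_right (by omega)) (Nat.lt_succ_self _)
    have hbn : Nat.log p n < b := lt_of_le_of_lt (Nat.log_mono_right (by omega)) (Nat.lt_succ_self _)
    have hbmn : Nat.log p (m + n) < b := lt_of_le_of_lt (Nat.log_mono_right (by omega)) (Nat.lt_succ_self _)
    have hb2m : Nat.log p (2 * m) < b := lt_of_le_of_lt (Nat.log_mono_right (by omega)) (Nat.lt_succ_self _)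
    have hb2n : Nat.log p (2 * n) < b := lt_of_le_of_lt (Nat.log_mono_right (by omega)) (Nat.lt_succ_self _)
    simp only [Nat.factorization_mul (Nat.factorial_ne_zero _) (Nat.factorial_ne_zero _),
      Nat.factorization_mul (mul_ne_zero (Nat.factorial_ne_zero _) (Nat.factorial_ne_zero _))
        (Nat.factorial_ne_zero _), Finsupp.coe_add, Pi.add_apply]
    rw [Nat.factorization_def _ hp, Nat.factorization_def _ hp, Nat.factorization_def _ hp,
      Nat.factorization_def _ hp, Nat.factorization_def _ hp,
      padicValNat_factorial hbm, padicValNat_factorial hbn, padicValNat_factorial hbmn,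
      padicValNat_factorial hb2m, padicValNat_factorial hb2n,
      ← Finset.sum_add_distrib, ← Finset.sum_add_distrib, ← Finset.sum_add_distrib]
    apply Finset.sum_le_sum
    intro i _
    exact super_catalan_div_ineq (p ^ i) m n (pow_pos hp.pos i)
  · simp [Nat.factorization_eq_zero_of_not_prime _ hp]
end

section
/- (Von Szily identity) For all nonnegative integers m and n, S(m,n) = \sum_{k \in \mathbb{Z}} (-1)^k \binom{2n}{n-k} \binom{2m}{m+k}, where S(m,n) = (2m)!(2n)!/(m! n! (m+n)!). -/
/-- Binomial coefficient with an integer lower argument: `0` when the lower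
argument is negative (and, via `Nat.choose`, `0` when it exceeds the top). -/
def ichoose (a : ℕ) (b : ℤ) : ℤ := if 0 ≤ b then (a.choose b.toNat : ℤ) else 0

/-- Super Catalan number `S(m,n) = (2m)!(2n)!/(m! n! (m+n)!)`. -/
def superCatalan (m n : ℕ) : ℕ :=
  (Nat.factorial (2 * m) * Nat.factorial (2 * n)) /
    (Nat.factorial m * Nat.factorial n * Nat.factorial (m + n))

/-! Both sides satisfy `f (m, n + 1) + f (m + 1, n) = 4 f (m, n)` and equal `C(2m, m)` at `n = 0`.
For the factorial quotient this is a rational identity. For the alternating sum, expand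
`C(a + 2, j) = C(a, j) + 2 C(a, j - 1) + C(a, j - 2)` in both terms on the left: after
subtracting four times the original summand, what remains is a difference `H k - H (k - 1)`,
whose sum over `ℤ` vanishes. To make `H` again of the same shape, the summand
`(-1)^k C(a, c - k) C(b, d + k)` is treated with independent offsets `c` and `d`. -/

open Function
open scoped Nat

theorem neg_one_pow_natAbs_sub_one {R : Type*} [Ring R] (k : ℤ) :
    (-1 : R) ^ (k - 1).natAbs = -(-1) ^ k.natAbs := by
  rcases le_or_gt k 0 with hk | hk
  · rw [show (k - 1).natAbs = k.natAbs + 1 by omega, pow_succ, mul_neg_one]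
  · rw [show k.natAbs = (k - 1).natAbs + 1 by omega, pow_succ, mul_neg_one, neg_neg]

theorem finsum_sub_comp_sub_one {G : Type*} [AddCommGroup G] {f : ℤ → G}
    (hf : f.HasFiniteSupport) : ∑ᶠ k, (f k - f (k - 1)) = 0 := by
  have hf' : HasFiniteSupport fun k => f (k - 1) := hf.comp_of_injective sub_left_injective
  rw [finsum_sub_distrib hf hf', sub_eq_zero]
  exact (finsum_comp_equiv (Equiv.subRight 1)).symm

theorem natCast_div_eq_of_ratCast_eq {a b : ℕ} {z : ℤ} (hb : b ≠ 0) (h : (z : ℚ) = a / b) :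
    ((a / b : ℕ) : ℤ) = z := by
  have hb' : (b : ℚ) ≠ 0 := Nat.cast_ne_zero.mpr hb
  have hab : (a : ℤ) = z * b := by
    exact_mod_cast (by rw [h, div_mul_cancel₀ _ hb'] : (a : ℚ) = z * b)
  have hdvd : b ∣ a := Int.natCast_dvd_natCast.mp ⟨z, by rw [hab, mul_comm]⟩
  apply Int.cast_injective (α := ℚ)
  rw [Int.cast_natCast, Nat.cast_div hdvd hb', h]

section ichoose

variable (a : ℕ)

theorem mem_Icc_of_ichoose_ne_zero {b : ℤ} (h : ichoose a b ≠ 0) : b ∈ Set.Icc 0 (a : ℤ) := by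
  unfold ichoose at h
  split_ifs at h with hb
  · have : b.toNat ≤ a := by
      by_contra hlt
      exact h (by rw [Nat.choose_eq_zero_of_lt (not_le.mp hlt), Nat.cast_zero])
    exact ⟨hb, by omega⟩
  · exact absurd rfl h

@[simp]
theorem ichoose_natCast (k : ℕ) : ichoose a k = a.choose k := by
  simp [ichoose]

theorem ichoose_zero_left (b : ℤ) : ichoose 0 b = if b = 0 then 1 else 0 := by
  split_ifs with hb
  · simp [hb, ichoose]
  · by_contra h
    have := mem_Icc_of_ichoose_ne_zero 0 h
    simp only [Set.mem_Icc, Nat.cast_zero] at this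
    omega

theorem ichoose_succ (b : ℤ) : ichoose (a + 1) b = ichoose a b + ichoose a (b - 1) := by
  rcases lt_trichotomy b 0 with hb | rfl | hb
  · simp only [ichoose, if_neg (not_le.mpr hb), if_neg (show ¬ (0 : ℤ) ≤ b - 1 by omega),
      add_zero]
  · simp [ichoose]
  · obtain ⟨t, rfl⟩ : ∃ t : ℕ, b = t + 1 := ⟨(b - 1).toNat, by omega⟩
    rw [add_sub_cancel_right, ← Nat.cast_succ, ichoose_natCast, ichoose_natCast,
      ichoose_natCast, Nat.choose_succ_succ, Nat.cast_add, add_comm]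

theorem ichoose_add_two (b : ℤ) :
    ichoose (a + 2) b = ichoose a b + 2 * ichoose a (b - 1) + ichoose a (b - 2) := by
  rw [ichoose_succ, ichoose_succ, ichoose_succ, sub_sub, one_add_one_eq_two]
  ring

end ichoose

section szilyTerm

def szilyTerm (a b : ℕ) (c d k : ℤ) : ℤ :=
  (-1) ^ k.natAbs * ichoose a (c - k) * ichoose b (d + k)

variable (a b : ℕ) (c d : ℤ)

theorem support_szilyTerm_subset : support (szilyTerm a b c d) ⊆ Set.Icc (c - a) (b - d) := by
  intro k hk
  rw [mem_support, szilyTerm] at hk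
  have h₁ := mem_Icc_of_ichoose_ne_zero a (right_ne_zero_of_mul (left_ne_zero_of_mul hk))
  have h₂ := mem_Icc_of_ichoose_ne_zero b (right_ne_zero_of_mul hk)
  simp only [Set.mem_Icc] at h₁ h₂ ⊢
  omega

theorem hasFiniteSupport_szilyTerm : (szilyTerm a b c d).HasFiniteSupport :=
  (Set.finite_Icc _ _).subset (support_szilyTerm_subset a b c d)

theorem finsum_szilyTerm_zero_left : ∑ᶠ k, szilyTerm 0 b 0 d k = ichoose b d := by
  rw [finsum_eq_single _ 0 fun k hk => by simp [szilyTerm, ichoose_zero_left, hk]]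
  simp [szilyTerm, ichoose]

theorem szilyTerm_recurrence_eq_sub (k : ℤ) :
    szilyTerm (a + 2) b (c + 1) d k + szilyTerm a (b + 2) c (d + 1) k - 4 * szilyTerm a b c d k =
      (szilyTerm a b c (d + 1) k + szilyTerm a b (c - 1) d k) -
        (szilyTerm a b c (d + 1) (k - 1) + szilyTerm a b (c - 1) d (k - 1)) := by
  simp only [szilyTerm, ichoose_add_two, neg_one_pow_natAbs_sub_one]
  ring_nf

theorem finsum_szilyTerm_recurrence :
    ∑ᶠ k, szilyTerm (a + 2) b (c + 1) d k + ∑ᶠ k, szilyTerm a (b + 2) c (d + 1) k =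
      4 * ∑ᶠ k, szilyTerm a b c d k := by
  have hfin := hasFiniteSupport_szilyTerm
  have hleft : HasFiniteSupport fun k =>
      szilyTerm (a + 2) b (c + 1) d k + szilyTerm a (b + 2) c (d + 1) k :=
    (hfin ..).add (hfin ..)
  have hright : HasFiniteSupport fun k => 4 * szilyTerm a b c d k := (hfin a b c d).mul_right _
  have hsum : ∑ᶠ k, (szilyTerm (a + 2) b (c + 1) d k + szilyTerm a (b + 2) c (d + 1) k -
      4 * szilyTerm a b c d k) = 0 := by
    simp_rw [szilyTerm_recurrence_eq_sub]
    exact finsum_sub_comp_sub_one ((hfin ..).add (hfin ..))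
  rwa [finsum_sub_distrib hleft hright, finsum_add_distrib (hfin ..) (hfin ..),
    ← mul_finsum, sub_eq_zero] at hsum

end szilyTerm

def superCatalanRat (m n : ℕ) : ℚ :=
  (((2 * m)! * (2 * n)! : ℕ) : ℚ) / ((m ! * n ! * (m + n)! : ℕ) : ℚ)

theorem superCatalanRat_zero_right (m : ℕ) : superCatalanRat m 0 = (2 * m).choose m := by
  have h := Nat.choose_mul_factorial_mul_factorial (Nat.le_mul_of_pos_left m two_pos)
  rw [show 2 * m - m = m by omega] at h
  rw [superCatalanRat, ← h]
  simp only [Nat.mul_zero, Nat.factorial_zero, Nat.mul_one, Nat.add_zero, Nat.cast_mul]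
  field_simp

theorem superCatalanRat_recurrence (m n : ℕ) :
    superCatalanRat m (n + 1) + superCatalanRat (m + 1) n = 4 * superCatalanRat m n := by
  rw [superCatalanRat, superCatalanRat, superCatalanRat,
    show 2 * (n + 1) = 2 * n + 1 + 1 by ring, show 2 * (m + 1) = 2 * m + 1 + 1 by ring,
    show m + (n + 1) = m + n + 1 by ring, show m + 1 + n = m + n + 1 by ring]
  simp only [Nat.factorial_succ]
  push_cast
  field_simp
  ring

theorem finsum_szilyTerm_eq_superCatalanRat (m n : ℕ) :
    ((∑ᶠ k, szilyTerm (2 * n) (2 * m) n m k : ℤ) : ℚ) = superCatalanRat m n := by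
  induction n generalizing m with
  | zero =>
    rw [superCatalanRat_zero_right, Nat.mul_zero, Nat.cast_zero, finsum_szilyTerm_zero_left,
      ichoose_natCast, Int.cast_natCast]
  | succ n ih =>
    have h := finsum_szilyTerm_recurrence (2 * n) (2 * m) n m
    have ih' := ih (m + 1)
    rw [show 2 * (m + 1) = 2 * m + 2 by ring, Nat.cast_succ] at ih'
    rw [show 2 * (n + 1) = 2 * n + 2 by ring, Nat.cast_succ, eq_sub_of_add_eq h]
    push_cast
    linarith [ih m, superCatalanRat_recurrence m n]

/-- Von Szily's identity:
`S(m,n) = ∑_k (-1)^k C(2n, n-k) C(2m, m+k)`, the sum over all integers `k`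
(all nonzero terms lie in `-m-n ≤ k ≤ m+n`). -/
theorem von_szily (m n : ℕ) :
    (superCatalan m n : ℤ) =
      ∑ k ∈ Finset.Icc (-(m : ℤ) - n) ((m : ℤ) + n),
        (-1) ^ k.natAbs * ichoose (2 * n) ((n : ℤ) - k) * ichoose (2 * m) ((m : ℤ) + k) := by
  have hsupp : support (szilyTerm (2 * n) (2 * m) n m) ⊆ Finset.Icc (-(m : ℤ) - n) (m + n) := by
    refine (support_szilyTerm_subset ..).trans fun k hk => ?_
    simp only [Set.mem_Icc, Finset.coe_Icc] at hk ⊢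
    push_cast at hk
    omega
  show _ = ∑ k ∈ _, szilyTerm (2 * n) (2 * m) n m k
  rw [← finsum_eq_finsetSum_of_support_subset _ hsupp]
  exact natCast_div_eq_of_ratCast_eq (by positivity) (finsum_szilyTerm_eq_superCatalanRat m n)
end

section
/- For all nonnegative integers m and s, S(m, m+s) = \sum_{k \in \mathbb{Z}} (-1)^k \binom{2m}{m-k} \binom{2s}{s+2k}, where S(m,n) = (2m)!(2n)!/(m! n! (m+n)!). -/
open Polynomial Finset

/-- Integer-valued recursion computing the super Catalan numbers. -/
def S' : ℕ → ℕ → ℤ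
  | m, 0 => ((2*m).choose m : ℤ)
  | m, n+1 => 4 * S' m n - S' (m+1) n

lemma S'_fac : ∀ (n m : ℕ),
    ((m.factorial * n.factorial * (m+n).factorial : ℕ) : ℤ) * S' m n
      = (((2*m).factorial * (2*n).factorial : ℕ) : ℤ) := by
  intro n
  induction n with
  | zero =>
    intro m
    have h := Nat.choose_mul_factorial_mul_factorial (Nat.le_mul_of_pos_left m (by norm_num) : m ≤ 2*m)
    have h2 : 2*m - m = m := by omega
    rw [h2] at h
    simp only [S', Nat.factorial_zero, Nat.add_zero, Nat.mul_zero]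
    push_cast
    nlinarith [h]
  | succ n ih =>
    intro m
    have IH1 := ih m
    have IH2 := ih (m+1)
    have hm1 : ((m:ℤ)+1) ≠ 0 := by positivity
    apply mul_left_cancel₀ hm1
    simp only [S']
    have e1 : (n+1).factorial = (n+1) * n.factorial := Nat.factorial_succ n
    have e2 : (m + (n+1)).factorial = (m+n+1) * (m+n).factorial := by
      rw [show m + (n+1) = (m+n)+1 by ring, Nat.factorial_succ]
    have e3 : (2*(n+1)).factorial = (2*n+2) * ((2*n+1) * (2*n).factorial) := by
      rw [show 2*(n+1) = (2*n+1)+1 by ring, Nat.factorial_succ, Nat.factorial_succ]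
    have e4 : (2*(m+1)).factorial = (2*m+2) * ((2*m+1) * (2*m).factorial) := by
      rw [show 2*(m+1) = (2*m+1)+1 by ring, Nat.factorial_succ, Nat.factorial_succ]
    have e5 : (m+1).factorial = (m+1) * m.factorial := Nat.factorial_succ m
    have e6 : (m+1+n).factorial = (m+n+1) * (m+n).factorial := by
      rw [show m+1+n = (m+n)+1 by ring, Nat.factorial_succ]
    rw [e5, e6, e4] at IH2
    rw [e3, e1, e2]
    push_cast at IH1 IH2 ⊢
    linear_combination (4*((n:ℤ)+1)*((m:ℤ)+(n:ℤ)+1)*((m:ℤ)+1)) * IH1 - ((n:ℤ)+1) * IH2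

lemma superCatalan_eq_S' (m n : ℕ) : (superCatalan m n : ℤ) = S' m n := by
  have h := S'_fac n m
  have hpos : 0 < m.factorial * n.factorial * (m+n).factorial := by positivity
  have hnn : 0 ≤ S' m n := by
    nlinarith [h, Int.natCast_pos.mpr hpos,
      Int.natCast_pos.mpr (Nat.factorial_pos (2*m)),
      Int.natCast_pos.mpr (Nat.factorial_pos (2*n))]
  have ht := Int.toNat_of_nonneg hnn
  have hnat : m.factorial * n.factorial * (m+n).factorial * (S' m n).toNat
      = (2*m).factorial * (2*n).factorial := by
    have h2 : ((m.factorial * n.factorial * (m+n).factorial * (S' m n).toNat : ℕ) : ℤ)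
        = (((2*m).factorial * (2*n).factorial : ℕ) : ℤ) := by
      push_cast [ht]
      push_cast at h
      linarith
    exact_mod_cast h2
  rw [superCatalan, ← hnat, Nat.mul_div_cancel_left _ hpos]
  exact Int.toNat_of_nonneg hnn

lemma coeff_key : ∀ (n m : ℕ),
    (((1 - X)^(2*m) * (1 + X)^(2*n) : ℤ[X])).coeff (m+n) = (-1)^m * S' m n := by
  intro n
  induction n with
  | zero =>
    intro m
    have h1 : ((1 - X : ℤ[X]))^(2*m) = (X + C (-1))^(2*m) := by
      have : ((1 - X : ℤ[X])) = (-1) * (X + C (-1)) := by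
        simp; ring
      rw [this, mul_pow]
      simp [pow_mul]
    simp only [Nat.mul_zero, pow_zero, mul_one, Nat.add_zero, h1, coeff_X_add_C_pow]
    rw [show S' m 0 = ((2*m).choose m : ℤ) from rfl]
    congr 1
    rw [show 2*m - m = m by omega]
  | succ n ih =>
    intro m
    have key : ((1 - X)^(2*m) * (1 + X)^(2*(n+1)) : ℤ[X])
        = (1 - X)^(2*(m+1)) * (1 + X)^(2*n)
          + C 4 * (X * ((1 - X)^(2*m) * (1 + X)^(2*n))) := by
      have h1 : (2*(n+1)) = 2*n + 2 := by ring
      have h2 : (2*(m+1)) = 2*m + 2 := by ring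
      rw [h1, h2, pow_add, pow_add]
      ring_nf
      simp [C_eq_natCast]
      ring
    have hidx : m + (n+1) = (m+n) + 1 := by omega
    rw [key, coeff_add, coeff_C_mul, hidx, coeff_X_mul,
      show (m+n)+1 = (m+1)+n by omega, ih (m+1), ih m,
      show S' m (n+1) = 4 * S' m n - S' (m+1) n from rfl]
    ring

lemma negpow (a b : ℕ) : ((-1:ℤ))^(((a:ℤ)-b).natAbs) = (-1)^(a+b) := by
  have hmod : (((a:ℤ)-b).natAbs) % 2 = (a+b) % 2 := by omega
  rcases Nat.even_or_odd (a+b) with h | h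
  · have h1 := Nat.even_iff.mp h
    have h2 : Even (((a:ℤ)-b).natAbs) := Nat.even_iff.mpr (by omega)
    rw [h2.neg_one_pow, h.neg_one_pow]
  · have h1 := Nat.odd_iff.mp h
    have h2 : Odd (((a:ℤ)-b).natAbs) := Nat.odd_iff.mpr (by omega)
    rw [h2.neg_one_pow, h.neg_one_pow]

lemma sum_eq (m s : ℕ) :
    (∑ k ∈ Finset.Icc (-(m : ℤ) - s) ((m : ℤ) + s),
        (-1) ^ k.natAbs * ichoose (2 * m) ((m : ℤ) - k) * ichoose (2 * s) ((s : ℤ) + 2 * k))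
      = S' m (m+s) := by
  have h1 : ∑ k ∈ Finset.Icc (-(m : ℤ) - s) ((m : ℤ) + s),
        (-1) ^ k.natAbs * ichoose (2 * m) ((m : ℤ) - k) * ichoose (2 * s) ((s : ℤ) + 2 * k)
      = ∑ k ∈ Finset.Icc (-(m : ℤ)) (m : ℤ),
        (-1) ^ k.natAbs * ichoose (2 * m) ((m : ℤ) - k) * ichoose (2 * s) ((s : ℤ) + 2 * k) := by
    refine (Finset.sum_subset (Finset.Icc_subset_Icc (by omega) (by omega))
      fun k hk hk2 => ?_).symm
    simp only [Finset.mem_Icc] at hk hk2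
    have hz : ichoose (2*m) ((m:ℤ) - k) = 0 := by
      unfold ichoose
      by_cases hle : (0:ℤ) ≤ (m:ℤ) - k
      · rw [if_pos hle]
        have : 2*m < ((m:ℤ) - k).toNat := by omega
        rw [Nat.choose_eq_zero_of_lt this, Nat.cast_zero]
      · rw [if_neg hle]
    rw [hz, mul_zero, zero_mul]
  rw [h1]
  have h2 : ∑ k ∈ Finset.Icc (-(m : ℤ)) (m : ℤ),
        (-1) ^ k.natAbs * ichoose (2 * m) ((m : ℤ) - k) * ichoose (2 * s) ((s : ℤ) + 2 * k)
      = ∑ j ∈ Finset.range (2*m+1),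
        (-1:ℤ) ^ (((m:ℤ) - j).natAbs) * ichoose (2 * m) ((j:ℤ)) * ichoose (2 * s) ((s : ℤ) + 2 * ((m:ℤ) - j)) := by
    refine Finset.sum_nbij' (i := fun k : ℤ => ((m:ℤ) - k).toNat) (j := fun j : ℕ => (m:ℤ) - j)
      ?_ ?_ ?_ ?_ ?_
    · intro k hk; simp only [Finset.mem_Icc] at hk; simp only [Finset.mem_range]; omega
    · intro j hj; simp only [Finset.mem_range] at hj; simp only [Finset.mem_Icc]; omega
    · intro k hk; simp only [Finset.mem_Icc] at hk
      show (m:ℤ) - ((((m:ℤ) - k).toNat : ℤ)) = k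
      omega
    · intro j hj; simp only [Finset.mem_range] at hj
      show (((m:ℤ) - ((m:ℤ) - ((j:ℕ) : ℤ))).toNat) = j
      omega
    · intro k hk; simp only [Finset.mem_Icc] at hk
      have e1 : ((((m:ℤ) - k).toNat : ℤ)) = (m:ℤ) - k := by omega
      simp only [e1, show (m:ℤ) - ((m:ℤ) - k) = k from by ring]
  rw [h2]
  have h3 : ∀ j ∈ Finset.range (2*m+1),
      (-1:ℤ) ^ (((m:ℤ) - j).natAbs) * ichoose (2 * m) ((j:ℤ)) * ichoose (2 * s) ((s : ℤ) + 2 * ((m:ℤ) - j))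
      = (-1:ℤ)^m * ((C (((-1:ℤ))^j * ((2*m).choose j : ℤ)) * ((X+1)^(2*s) * X^(2*j)) : ℤ[X]).coeff (2*m+s)) := by
    intro j hj
    have hi : ichoose (2*m) ((j:ℤ)) = ((2*m).choose j : ℤ) := by
      unfold ichoose
      rw [if_pos (by positivity), Int.toNat_natCast]
    have hc : ichoose (2 * s) ((s : ℤ) + 2 * ((m:ℤ) - j))
        = (((X+1)^(2*s) * X^(2*j) : ℤ[X])).coeff (2*m+s) := by
      rw [coeff_mul_X_pow']
      by_cases hle : 2*j ≤ 2*m+s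
      · rw [if_pos hle]
        unfold ichoose
        rw [if_pos (by omega), coeff_X_add_one_pow]
        congr 2
        omega
      · rw [if_neg hle]
        unfold ichoose
        rw [if_neg (by omega)]
    rw [hi, hc, coeff_C_mul, negpow]
    ring
  rw [Finset.sum_congr rfl h3, ← Finset.mul_sum]
  have h4 : (∑ j ∈ Finset.range (2*m+1),
      ((C (((-1:ℤ))^j * ((2*m).choose j : ℤ)) * ((X+1)^(2*s) * X^(2*j)) : ℤ[X]).coeff (2*m+s)))
      = (((1 - X)^(2*m) * (1 + X)^(2*(m+s)) : ℤ[X])).coeff (2*m+s) := by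
    rw [← Polynomial.finset_sum_coeff]
    congr 1
    have hb := add_pow (-X^2 : ℤ[X]) 1 (2*m)
    have hs : ∑ j ∈ Finset.range (2*m+1),
        (C (((-1:ℤ))^j * ((2*m).choose j : ℤ)) * ((X+1)^(2*s) * X^(2*j)) : ℤ[X])
        = (-X^2 + 1)^(2*m) * (X+1)^(2*s) := by
      rw [hb, Finset.sum_mul]
      refine Finset.sum_congr rfl fun j hj => ?_
      simp only [one_pow, mul_one, map_mul, map_pow, map_neg, map_one, C_eq_natCast]
      ring
    rw [hs]
    have : ((-X^2 + 1 : ℤ[X])) = (1 - X) * (1 + X) := by ring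
    rw [this, mul_pow, show 2*(m+s) = 2*m + 2*s by ring, pow_add]
    ring
  rw [h4, show 2*m+s = m + (m+s) by omega, coeff_key]
  rw [← mul_assoc, ← mul_pow]
  norm_num

/-- `S(m, m+s) = ∑_k (-1)^k C(2m, m-k) C(2s, s+2k)`, summed over all integers
`k` (all nonzero terms satisfy `-m-s ≤ k ≤ m+s`). -/
theorem superCatalan_shift_identity (m s : ℕ) :
    (superCatalan m (m + s) : ℤ) =
      ∑ k ∈ Finset.Icc (-(m : ℤ) - s) ((m : ℤ) + s),
        (-1) ^ k.natAbs * ichoose (2 * m) ((m : ℤ) - k) * ichoose (2 * s) ((s : ℤ) + 2 * k) := by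
  rw [superCatalan_eq_S']
  exact (sum_eq m s).symm
end

section
/- For all nonnegative integers m, S(m,m+3) = 4(2m+5) C_m, where C_m = (2m)!/(m!(m+1)!) and S(m,n) = (2m)!(2n)!/(m! n! (m+n)!). -/
/-- Catalan number `C_m = (2m)!/(m!(m+1)!)`. -/
def cat (m : ℕ) : ℕ :=
  Nat.factorial (2 * m) / (Nat.factorial m * Nat.factorial (m + 1))

lemma fact_eq_catalan (m : ℕ) :
    Nat.factorial (2 * m) = catalan m * (Nat.factorial m * Nat.factorial (m + 1)) := by
  have h1 := succ_mul_catalan_eq_centralBinom m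
  have h2 := Nat.choose_mul_factorial_mul_factorial (Nat.le_mul_of_pos_left m (by norm_num) : m ≤ 2 * m)
  have h3 : 2 * m - m = m := by omega
  rw [h3] at h2
  have h4 : Nat.centralBinom m = (2 * m).choose m := rfl
  calc Nat.factorial (2 * m) = (2 * m).choose m * Nat.factorial m * Nat.factorial m := h2.symm
    _ = (m + 1) * catalan m * Nat.factorial m * Nat.factorial m := by rw [← h4, ← h1]
    _ = catalan m * (Nat.factorial m * ((m + 1) * Nat.factorial m)) := by ring
    _ = catalan m * (Nat.factorial m * Nat.factorial (m + 1)) := by rw [← Nat.factorial_succ]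

lemma cat_eq_catalan (m : ℕ) : cat m = catalan m := by
  unfold cat
  exact Nat.div_eq_of_eq_mul_left (by positivity) (fact_eq_catalan m)

/-- `S(m,m+3) = 4(2m+5) C_m`. -/
theorem superCatalan_add_three (m : ℕ) : superCatalan m (m + 3) = 4 * (2 * m + 5) * cat m := by
  unfold superCatalan
  rw [cat_eq_catalan]
  apply Nat.div_eq_of_eq_mul_left (by positivity)
  have h1 : 2 * (m + 3) = (2 * m + 3) + 3 := by ring
  have h2 : m + (m + 3) = (2 * m + 3) := by ring
  rw [h1, h2]
  have e1 : Nat.factorial ((2 * m + 3) + 3)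
      = (2 * m + 6) * (2 * m + 5) * (2 * m + 4) * Nat.factorial (2 * m + 3) := by
    rw [show (2 * m + 3) + 3 = (2 * m + 5) + 1 by ring, Nat.factorial_succ,
      show (2 * m + 5) = (2 * m + 4) + 1 by ring, Nat.factorial_succ,
      show (2 * m + 4) = (2 * m + 3) + 1 by ring, Nat.factorial_succ]
    ring
  have e2 : Nat.factorial (m + 3) = (m + 3) * (m + 2) * Nat.factorial (m + 1) := by
    rw [show m + 3 = (m + 2) + 1 by ring, Nat.factorial_succ,
      show m + 2 = (m + 1) + 1 by ring, Nat.factorial_succ]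
    ring
  rw [e1, e2, fact_eq_catalan m]
  ring
end

section
/- For all nonnegative integers m and s, S(m,m+s) = \binom{2m}{m}\binom{2s}{s} - \binom{2m}{m-1}\binom{2s}{s+2} - \binom{2m}{m+1}\binom{2s}{s-2} + \binom{2m}{m-2}\binom{2s}{s+4} + \binom{2m}{m+2}\binom{2s}{s-4} when s \le 4, where S(m,n) = (2m)!(2n)!/(m! n! (m+n)!) and out-of-range binomial coefficients are 0. -/
open Nat Finset

lemma fact_add (n : ℕ) : ∀ k, (n + k)! = ((Finset.range k).prod (fun i => n + i + 1)) * n !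
  | 0 => by simp
  | (k+1) => by
      rw [Finset.prod_range_succ, show n + (k+1) = (n+k)+1 from rfl, Nat.factorial_succ,
        fact_add n k]; ring

lemma two_mul_factorial (m : ℕ) : (2*m)! = ((m+1) * catalan m) * (m ! * m !) := by
  have h := Nat.choose_mul_factorial_mul_factorial (show m ≤ 2*m by omega)
  have h2 : 2*m - m = m := by omega
  rw [h2] at h
  have h3 : (2*m).choose m = (m+1) * catalan m := by
    rw [succ_mul_catalan_eq_centralBinom, Nat.centralBinom_eq_two_mul_choose]
  rw [← h, h3]; ring

lemma catSucc (m : ℕ) : (m+2) * catalan (m+1) = 2*(2*m+1) * catalan m := by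
  have h := Nat.succ_mul_centralBinom_succ m
  rw [← succ_mul_catalan_eq_centralBinom, ← succ_mul_catalan_eq_centralBinom] at h
  refine Nat.eq_of_mul_eq_mul_left (show 0 < m+1 by omega) ?_
  have hz : ((m:ℤ)+1) * (((m:ℤ)+1+1) * (catalan (m+1) : ℤ)) = 2*(2*(m:ℤ)+1) * (((m:ℤ)+1) * (catalan m : ℤ)) := by exact_mod_cast h
  have : ((m:ℤ)+1) * (((m:ℤ)+2) * (catalan (m+1) : ℤ)) = ((m:ℤ)+1) * (2*(2*(m:ℤ)+1) * (catalan m : ℤ)) := by linear_combination hz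
  exact_mod_cast this

lemma ich_natCast (a k : ℕ) : ichoose a (k : ℤ) = a.choose k := by
  simp [ichoose]

lemma ich_add (a m k : ℕ) : ichoose a ((m:ℤ)+k) = a.choose (m+k) := by
  rw [show (m:ℤ)+k = ((m+k:ℕ):ℤ) by push_cast; ring, ich_natCast]

lemma ich_sub_one (m : ℕ) : ichoose (2*m) ((m:ℤ)-1) = (2*m).choose (m+1) := by
  match m with
  | 0 => simp [ichoose]
  | (k+1) =>
    rw [show ((k+1:ℕ):ℤ)-1 = (k:ℤ) by push_cast; ring, ich_natCast]
    have h : 2*(k+1) - (k+2) = k := by omega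
    rw [show (k+1)+1 = k+2 from rfl, ← Nat.choose_symm (show k+2 ≤ 2*(k+1) by omega), h]

lemma ich_sub_two (m : ℕ) : ichoose (2*m) ((m:ℤ)-2) = (2*m).choose (m+2) := by
  match m with
  | 0 => simp [ichoose]
  | 1 => simp [ichoose]
  | (k+2) =>
    rw [show ((k+2:ℕ):ℤ)-2 = (k:ℤ) by push_cast; ring, ich_natCast]
    have h : 2*(k+2) - (k+4) = k := by omega
    rw [show (k+2)+2 = k+4 from rfl, ← Nat.choose_symm (show k+4 ≤ 2*(k+2) by omega), h]

lemma hb' (m : ℕ) : (2*m).choose (m+1) * (m+1) = (2*m).choose m * m := by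
  have := Nat.choose_succ_right_eq (2*m) m
  rwa [show 2*m - m = m by omega] at this

lemma he' (m : ℕ) : ((2*m).choose (m+2) : ℤ) * ((m:ℤ)+2) = ((2*m).choose (m+1) : ℤ) * ((m:ℤ)-1) := by
  match m with
  | 0 => simp
  | (k+1) =>
    have h := Nat.choose_succ_right_eq (2*(k+1)) (k+2)
    rw [show 2*(k+1) - (k+2) = k by omega] at h
    have h' : ((2*(k+1)).choose (k+3) : ℤ) * ((k:ℤ)+3) = ((2*(k+1)).choose (k+2) : ℤ) * k := by
      exact_mod_cast congrArg (Nat.cast : ℕ → ℤ) h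
    push_cast
    push_cast at h'
    linarith [h']

lemma ich_add_one (m : ℕ) : ichoose (2*m) ((m:ℤ)+1) = (2*m).choose (m+1) := by
  rw [show (m:ℤ)+1 = ((m+1:ℕ):ℤ) by push_cast; ring, ich_natCast]

lemma ich_add_two (m : ℕ) : ichoose (2*m) ((m:ℤ)+2) = (2*m).choose (m+2) := by
  rw [show (m:ℤ)+2 = ((m+2:ℕ):ℤ) by push_cast; ring, ich_natCast]

lemma choose_central (m : ℕ) : (((2*m).choose m : ℕ) : ℤ) = ((m:ℤ)+1) * (catalan m : ℤ) := by
  have : (2*m).choose m = (m+1) * catalan m := by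
    rw [succ_mul_catalan_eq_centralBinom, Nat.centralBinom_eq_two_mul_choose]
  exact_mod_cast this

lemma hbz (m : ℕ) : (((2*m).choose (m+1) : ℕ) : ℤ) * ((m:ℤ)+1) = (((2*m).choose m : ℕ):ℤ) * m := by
  exact_mod_cast hb' m

lemma catSuccZ (m : ℕ) : ((m:ℤ)+2) * (catalan (m+1) : ℤ) = 2*(2*(m:ℤ)+1) * (catalan m : ℤ) := by
  exact_mod_cast catSucc m

lemma sc_eq (m n r : ℕ) (h : (2*m)! * (2*n)! = (m ! * n ! * (m+n)!) * r) :
    superCatalan m n = r := by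
  unfold superCatalan
  rw [h, Nat.mul_div_cancel_left]
  positivity

/-- For `s ≤ 4`, `S(m, m+s)` equals the five-term alternating sum
`C(2m,m)C(2s,s) - C(2m,m-1)C(2s,s+2) - C(2m,m+1)C(2s,s-2)
  + C(2m,m-2)C(2s,s+4) + C(2m,m+2)C(2s,s-4)`. -/
theorem superCatalan_five_terms (m s : ℕ) (hs : s ≤ 4) :
    (superCatalan m (m + s) : ℤ) =
      ichoose (2 * m) (m : ℤ) * ichoose (2 * s) (s : ℤ)
        - ichoose (2 * m) ((m : ℤ) - 1) * ichoose (2 * s) ((s : ℤ) + 2)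
        - ichoose (2 * m) ((m : ℤ) + 1) * ichoose (2 * s) ((s : ℤ) - 2)
        + ichoose (2 * m) ((m : ℤ) - 2) * ichoose (2 * s) ((s : ℤ) + 4)
        + ichoose (2 * m) ((m : ℤ) + 2) * ichoose (2 * s) ((s : ℤ) - 4) := by
  interval_cases s
  · -- s = 0
    have hA : (2*m)! * (2*(m+0))! = (m ! * (m+0)! * (m+(m+0))!) * ((m+1)*catalan m) := by
      rw [show 2*(m+0) = 2*m by ring, show m+(m+0) = 2*m by ring, show m+0 = m from rfl,
        two_mul_factorial]
      ring
    rw [sc_eq m (m+0) _ hA]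
    simp only [ich_natCast, ich_sub_one, ich_add_one, ich_sub_two, ich_add_two]
    norm_num [ichoose, show ((4:ℤ)).toNat = 4 from rfl, show ((5:ℤ)).toNat = 5 from rfl, show ((6:ℤ)).toNat = 6 from rfl, show ((7:ℤ)).toNat = 7 from rfl, show ((8:ℤ)).toNat = 8 from rfl, show (0:ℕ).choose 0 = 1 from by decide, show (0:ℕ).choose 2 = 0 from by decide, show (0:ℕ).choose 4 = 0 from by decide, show (2:ℕ).choose 1 = 2 from by decide, show (2:ℕ).choose 3 = 0 from by decide, show (2:ℕ).choose 5 = 0 from by decide, show (4:ℕ).choose 2 = 6 from by decide, show (4:ℕ).choose 4 = 1 from by decide, show (4:ℕ).choose 6 = 0 from by decide, show (6:ℕ).choose 3 = 20 from by decide, show (6:ℕ).choose 5 = 6 from by decide, show (6:ℕ).choose 1 = 6 from by decide, show (6:ℕ).choose 7 = 0 from by decide, show (8:ℕ).choose 4 = 70 from by decide, show (8:ℕ).choose 6 = 28 from by decide, show (8:ℕ).choose 2 = 28 from by decide, show (8:ℕ).choose 8 = 1 from by decide, show (8:ℕ).choose 0 = 1 from by decide]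
    linear_combination -choose_central m
  · -- s = 1
    have hA : (2*m)! * (2*(m+1))! = (m ! * (m+1)! * (m+(m+1))!) * (2*((m+1)*catalan m)) := by
      rw [show 2*(m+1) = 2*m+2 by ring, show m+(m+1) = 2*m+1 by ring,
        fact_add (2*m) 2, fact_add m 1, fact_add (2*m) 1]
      simp only [Finset.prod_range_succ, Finset.prod_range_zero]
      rw [two_mul_factorial]
      ring
    rw [sc_eq m (m+1) _ hA]
    simp only [ich_natCast, ich_sub_one, ich_add_one, ich_sub_two, ich_add_two]
    norm_num [ichoose, show ((4:ℤ)).toNat = 4 from rfl, show ((5:ℤ)).toNat = 5 from rfl, show ((6:ℤ)).toNat = 6 from rfl, show ((7:ℤ)).toNat = 7 from rfl, show ((8:ℤ)).toNat = 8 from rfl, show (0:ℕ).choose 0 = 1 from by decide, show (0:ℕ).choose 2 = 0 from by decide, show (0:ℕ).choose 4 = 0 from by decide, show (2:ℕ).choose 1 = 2 from by decide, show (2:ℕ).choose 3 = 0 from by decide, show (2:ℕ).choose 5 = 0 from by decide, show (4:ℕ).choose 2 = 6 from by decide, show (4:ℕ).choose 4 = 1 from by decide, show (4:ℕ).choose 6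 = 0 from by decide, show (6:ℕ).choose 3 = 20 from by decide, show (6:ℕ).choose 5 = 6 from by decide, show (6:ℕ).choose 1 = 6 from by decide, show (6:ℕ).choose 7 = 0 from by decide, show (8:ℕ).choose 4 = 70 from by decide, show (8:ℕ).choose 6 = 28 from by decide, show (8:ℕ).choose 2 = 28 from by decide, show (8:ℕ).choose 8 = 1 from by decide, show (8:ℕ).choose 0 = 1 from by decide]
    linear_combination (-2 : ℤ) * choose_central m
  · -- s = 2
    have hA : (2*m)! * (2*(m+2))! = (m ! * (m+2)! * (m+(m+2))!) * ((4*m+6)*catalan m) := by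
      rw [show 2*(m+2) = 2*m+4 by ring, show m+(m+2) = 2*m+2 by ring,
        fact_add (2*m) 4, fact_add m 2, fact_add (2*m) 2]
      simp only [Finset.prod_range_succ, Finset.prod_range_zero]
      rw [two_mul_factorial]
      ring
    rw [sc_eq m (m+2) _ hA]
    simp only [ich_natCast, ich_sub_one, ich_add_one, ich_sub_two, ich_add_two]
    norm_num [ichoose, show ((4:ℤ)).toNat = 4 from rfl, show ((5:ℤ)).toNat = 5 from rfl, show ((6:ℤ)).toNat = 6 from rfl, show ((7:ℤ)).toNat = 7 from rfl, show ((8:ℤ)).toNat = 8 from rfl, show (0:ℕ).choose 0 = 1 from by decide, show (0:ℕ).choose 2 = 0 from by decide, show (0:ℕ).choose 4 = 0 from by decide, show (2:ℕ).choose 1 = 2 from by decide, show (2:ℕ).choose 3 = 0 from by decide, show (2:ℕ).choose 5 = 0 from by decide, show (4:ℕ).choose 2 = 6 from by decide, show (4:ℕ).choose 4 = 1 from by decide, show (4:ℕ).choose 6 = 0 from by decide, show (6:ℕ).choose 3 = 20 from by decide, show (6:ℕ).choose 5 = 6 from by decide, show (6:ℕ).choose 1 = 6 from by decide, show (6:ℕ).choose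 7 = 0 from by decide, show (8:ℕ).choose 4 = 70 from by decide, show (8:ℕ).choose 6 = 28 from by decide, show (8:ℕ).choose 2 = 28 from by decide, show (8:ℕ).choose 8 = 1 from by decide, show (8:ℕ).choose 0 = 1 from by decide]
    apply mul_left_cancel₀ (show ((m:ℤ)+1) ≠ 0 by positivity)
    linear_combination (-(4*(m:ℤ)+6)) * choose_central m + 2 * hbz m
  · -- s = 3
    have hA : (2*m)! * (2*(m+3))! = (m ! * (m+3)! * (m+(m+3))!) * ((8*m+20)*catalan m) := by
      rw [show 2*(m+3) = 2*m+6 by ring, show m+(m+3) = 2*m+3 by ring,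
        fact_add (2*m) 6, fact_add m 3, fact_add (2*m) 3]
      simp only [Finset.prod_range_succ, Finset.prod_range_zero]
      rw [two_mul_factorial]
      ring
    rw [sc_eq m (m+3) _ hA]
    simp only [ich_natCast, ich_sub_one, ich_add_one, ich_sub_two, ich_add_two]
    norm_num [ichoose, show ((4:ℤ)).toNat = 4 from rfl, show ((5:ℤ)).toNat = 5 from rfl, show ((6:ℤ)).toNat = 6 from rfl, show ((7:ℤ)).toNat = 7 from rfl, show ((8:ℤ)).toNat = 8 from rfl, show (0:ℕ).choose 0 = 1 from by decide, show (0:ℕ).choose 2 = 0 from by decide, show (0:ℕ).choose 4 = 0 from by decide, show (2:ℕ).choose 1 = 2 from by decide, show (2:ℕ).choose 3 = 0 from by decide, show (2:ℕ).choose 5 = 0 from by decide, show (4:ℕ).choose 2 = 6 from by decide, show (4:ℕ).choose 4 = 1 from by decide, show (4:ℕ).choose 6 = 0 from by decide, show (6:ℕ).choose 3 = 20 from by decide, show (6:ℕ).choose 5 = 6 from by decide, show (6:ℕ).choose 1 = 6 from by decide, show (6:ℕ).choose 7 = 0 from by decide, show (8:ℕ).choose 4 = 70 from by decide, show (8:ℕ).choose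 6 = 28 from by decide, show (8:ℕ).choose 2 = 28 from by decide, show (8:ℕ).choose 8 = 1 from by decide, show (8:ℕ).choose 0 = 1 from by decide]
    apply mul_left_cancel₀ (show ((m:ℤ)+1) ≠ 0 by positivity)
    linear_combination (-(8*(m:ℤ)+20)) * choose_central m + 12 * hbz m
  · -- s = 4
    have hr4 : (m+2) * (64*catalan m + (4*m+6)*catalan (m+1))
        = (m+2)*64*catalan m + (4*m+6)*(2*(2*m+1)*catalan m) := by
      rw [← catSucc]; ring
    have hA' : (m+2) * ((2*m)! * (2*(m+4))!)
        = (m+2) * ((m ! * (m+4)! * (m+(m+4))!) * (64*catalan m + (4*m+6)*catalan (m+1))) := by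
      have step : (m+2) * ((m ! * (m+4)! * (m+(m+4))!) * (64*catalan m + (4*m+6)*catalan (m+1)))
          = (m ! * (m+4)! * (m+(m+4))!) *
            ((m+2)*64*catalan m + (4*m+6)*(2*(2*m+1)*catalan m)) := by
        rw [← hr4]; ring
      rw [step, show 2*(m+4) = 2*m+8 by ring, show m+(m+4) = 2*m+4 by ring,
        fact_add (2*m) 8, fact_add m 4, fact_add (2*m) 4]
      simp only [Finset.prod_range_succ, Finset.prod_range_zero]
      rw [two_mul_factorial]
      ring
    have hA := Nat.eq_of_mul_eq_mul_left (show 0 < m+2 by omega) hA'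
    rw [sc_eq m (m+4) _ hA]
    simp only [ich_natCast, ich_sub_one, ich_add_one, ich_sub_two, ich_add_two]
    norm_num [ichoose, show ((4:ℤ)).toNat = 4 from rfl, show ((5:ℤ)).toNat = 5 from rfl, show ((6:ℤ)).toNat = 6 from rfl, show ((7:ℤ)).toNat = 7 from rfl, show ((8:ℤ)).toNat = 8 from rfl, show (0:ℕ).choose 0 = 1 from by decide, show (0:ℕ).choose 2 = 0 from by decide, show (0:ℕ).choose 4 = 0 from by decide, show (2:ℕ).choose 1 = 2 from by decide, show (2:ℕ).choose 3 = 0 from by decide, show (2:ℕ).choose 5 = 0 from by decide, show (4:ℕ).choose 2 = 6 from by decide, show (4:ℕ).choose 4 = 1 from by decide, show (4:ℕ).choose 6 = 0 from by decide, show (6:ℕ).choose 3 = 20 from by decide, show (6:ℕ).choose 5 = 6 from by decide, show (6:ℕ).choose 1 = 6 from by decide, show (6:ℕ).choose 7 = 0 from by decide, show (8:ℕ).choose 4 = 70 from by decide, show (8:ℕ).choose 6 = 28 from by decide, show (8:ℕ).choose 2 = 28 from by decide, show (8:ℕ).choose 8 = 1 from by decide, show (8:ℕ).choose 0 = 1 from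 by decide]
    apply mul_left_cancel₀ (show ((m:ℤ)+1)*((m:ℤ)+2) ≠ 0 by positivity)
    linear_combination (-16*(m:ℤ)^2-96*(m:ℤ)-140) * choose_central m + (54*(m:ℤ)+114) * hbz m
      + (-2*((m:ℤ)+1)) * he' m + ((4*(m:ℤ)+6)*((m:ℤ)+1)) * catSuccZ m
end

section
/- Let m \le n be nonnegative integers. On sequences P = (s_1,...,s_{2m+2n}) in {R,U}^{2m+2n} with exactly m+n letters R, define \phi(P) by finding the least i with 1 \le i \le 2m and s_i \ne s_{2m+i} (if it exists) and swapping s_i with s_{2m+i}. Then \phi is an involution on the set of such sequences for which such an i exists, and \phi changes the parity of the number of R's among the first 2m entries. -/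
/-- The sign-reversing involution `φ`: given a sequence of steps
`P : ℕ → Bool` (`true` = right step `R`, `false` = up step `U`), find the
least index `i < 2m` (0-based) with `P i ≠ P (2m + i)`, if one exists, and
swap these two entries; otherwise do nothing. -/
noncomputable def phi (m : ℕ) (P : ℕ → Bool) : ℕ → Bool := by
  classical
  exact
    if h : ∃ i, i < 2 * m ∧ P i ≠ P (2 * m + i) then
      let i := Nat.find h
      fun j => if j = i then P (2 * m + i) else if j = 2 * m + i then P i else P j
    else P

lemma phi_apply (m : ℕ) (P : ℕ → Bool) (h : ∃ i, i < 2 * m ∧ P i ≠ P (2 * m + i)) (j : ℕ) :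
    phi m P j = if j = Nat.find h then P (2 * m + Nat.find h)
      else if j = 2 * m + Nat.find h then P (Nat.find h) else P j := by
  simp only [phi, dif_pos h]

/-- `φ` is an involution on the set of sequences in `{R,U}^(2m+2n)` with
exactly `m+n` right steps admitting a mismatch `P i ≠ P (2m+i)` with
`i < 2m`, and it reverses the parity of the number of `R`'s among the first
`2m` entries. -/
theorem phi_involution (m n : ℕ) (hmn : m ≤ n) (P : ℕ → Bool)
    (hR : (Finset.filter (fun i => P i = true) (Finset.range (2 * m + 2 * n))).card = m + n)
    (h : ∃ i, i < 2 * m ∧ P i ≠ P (2 * m + i)) :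
    (Finset.filter (fun i => phi m P i = true) (Finset.range (2 * m + 2 * n))).card = m + n ∧
    (∃ i, i < 2 * m ∧ phi m P i ≠ phi m P (2 * m + i)) ∧
    (∀ j, phi m (phi m P) j = P j) ∧
    (Finset.filter (fun i => phi m P i = true) (Finset.range (2 * m))).card % 2 ≠
      (Finset.filter (fun i => P i = true) (Finset.range (2 * m))).card % 2 := by
  classical
  set i := Nat.find h with hidef
  have hi2m : i < 2 * m := (Nat.find_spec h).1
  have hne : P i ≠ P (2 * m + i) := (Nat.find_spec h).2
  have hmin : ∀ j, j < i → P j = P (2 * m + j) := by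
    intro j hj
    by_contra hc
    exact Nat.find_min h hj ⟨hj.trans hi2m, hc⟩
  have hQ : ∀ j, phi m P j =
      if j = i then P (2 * m + i) else if j = 2 * m + i then P i else P j := by
    intro j; rw [phi_apply m P h j]
  have hQi : phi m P i = P (2 * m + i) := by rw [hQ, if_pos rfl]
  have hQi' : phi m P (2 * m + i) = P i := by
    rw [hQ, if_neg (by omega), if_pos rfl]
  have hQo : ∀ j, j ≠ i → j ≠ 2 * m + i → phi m P j = P j := by
    intro j h1 h2; rw [hQ, if_neg h1, if_neg h2]
  set Q := phi m P with hQdef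
  -- mismatch for Q at i
  have hQne : Q i ≠ Q (2 * m + i) := by
    rw [hQi, hQi']; exact fun e => hne e.symm
  have h' : ∃ j, j < 2 * m ∧ Q j ≠ Q (2 * m + j) := ⟨i, hi2m, hQne⟩
  -- Part 1 : card preserved
  have part1 : (Finset.filter (fun j => Q j = true) (Finset.range (2 * m + 2 * n))).card
      = (Finset.filter (fun j => P j = true) (Finset.range (2 * m + 2 * n))).card := by
    set σ : ℕ → ℕ := fun j => if j = i then 2 * m + i else if j = 2 * m + i then i else j with hσ
    have hne2 : 2 * m + i ≠ i := by omega
    have s1 : σ i = 2 * m + i := by simp [hσ]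
    have s2 : σ (2 * m + i) = i := by simp [hσ, hne2]
    have s3 : ∀ j, j ≠ i → j ≠ 2 * m + i → σ j = j := by
      intro j a b; simp [hσ, a, b]
    have hσσ : ∀ j, σ (σ j) = j := by
      intro j
      by_cases h1 : j = i
      · subst h1; rw [s1, s2]
      · by_cases h2 : j = 2 * m + i
        · subst h2; rw [s2, s1]
        · rw [s3 j h1 h2, s3 j h1 h2]
    have hQσ : ∀ j, Q j = P (σ j) := by
      intro j
      by_cases h1 : j = i
      · subst h1; rw [s1]; exact hQi
      · by_cases h2 : j = 2 * m + i
        · subst h2; rw [s2]; exact hQi'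
        · rw [s3 j h1 h2]; exact hQo j h1 h2
    have hσmem : ∀ j, j ∈ Finset.range (2 * m + 2 * n) → σ j ∈ Finset.range (2 * m + 2 * n) := by
      intro j hj
      simp only [Finset.mem_range] at hj ⊢
      by_cases h1 : j = i
      · subst h1; rw [s1]; omega
      · by_cases h2 : j = 2 * m + i
        · subst h2; rw [s2]; omega
        · rw [s3 j h1 h2]; exact hj
    apply Finset.card_bij' (fun j _ => σ j) (fun j _ => σ j)
    · intro a ha
      simp only [Finset.mem_filter] at ha ⊢
      exact ⟨hσmem a ha.1, by rw [← hQσ a]; exact ha.2⟩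
    · intro a ha
      simp only [Finset.mem_filter] at ha ⊢
      refine ⟨hσmem a ha.1, ?_⟩
      rw [hQσ (σ a), hσσ]; exact ha.2
    · intro a _; exact hσσ a
    · intro a _; exact hσσ a
  -- Part 3 : involution
  have hfind' : Nat.find h' = i := by
    rw [Nat.find_eq_iff]
    refine ⟨⟨hi2m, hQne⟩, ?_⟩
    intro j hj
    push_neg
    intro _
    have e1 : Q j = P j := hQo j (by omega) (by omega)
    have e2 : Q (2 * m + j) = P (2 * m + j) := hQo _ (by omega) (by omega)
    rw [e1, e2, hmin j hj]
  have part3 : ∀ j, phi m Q j = P j := by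
    intro j
    rw [phi_apply m Q h' j, hfind']
    by_cases h1 : j = i
    · subst h1; rw [if_pos rfl]; exact hQi'
    · rw [if_neg h1]
      by_cases h2 : j = 2 * m + i
      · subst h2; rw [if_pos rfl]; exact hQi
      · rw [if_neg h2]; exact hQo j h1 h2
  -- Part 4 : parity
  have hinotin : (2 * m + i) ∉ Finset.range (2 * m) := by simp
  have hiin : i ∈ Finset.range (2 * m) := by simp [hi2m]
  have hsame : ∀ j ∈ Finset.range (2 * m), j ≠ i → Q j = P j := by
    intro j hj hji
    exact hQo j hji (by simp only [Finset.mem_range] at hj; omega)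
  have part4 : (Finset.filter (fun j => Q j = true) (Finset.range (2 * m))).card % 2 ≠
      (Finset.filter (fun j => P j = true) (Finset.range (2 * m))).card % 2 := by
    by_cases hPi : P i = true
    · have hQifalse : Q i = false := by
        rw [hQi]
        cases hb : P (2 * m + i)
        · rfl
        · exact absurd (hPi.trans hb.symm) hne
      have heq : Finset.filter (fun j => Q j = true) (Finset.range (2 * m)) =
          (Finset.filter (fun j => P j = true) (Finset.range (2 * m))).erase i := by
        ext j
        simp only [Finset.mem_erase, Finset.mem_filter]
        constructor
        · intro ⟨hj, hQj⟩
          have hji : j ≠ i := by rintro rfl; rw [hQifalse] at hQj; exact Bool.false_ne_true hQj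
          exact ⟨hji, hj, (hsame j hj hji) ▸ hQj⟩
        · intro ⟨hji, hj, hPj⟩
          exact ⟨hj, (hsame j hj hji).symm ▸ hPj⟩
      have himem : i ∈ Finset.filter (fun j => P j = true) (Finset.range (2 * m)) :=
        Finset.mem_filter.2 ⟨hiin, hPi⟩
      have hpos : 0 < (Finset.filter (fun j => P j = true) (Finset.range (2 * m))).card :=
        Finset.card_pos.2 ⟨i, himem⟩
      rw [heq, Finset.card_erase_of_mem himem]
      omega
    · have hPif : P i = false := by
        cases hb : P i
        · rfl
        · exact absurd hb hPi
      have hQitrue : Q i = true := by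
        rw [hQi]
        cases hb : P (2 * m + i)
        · exact absurd (hPif.trans hb.symm) hne
        · rfl
      have heq : Finset.filter (fun j => Q j = true) (Finset.range (2 * m)) =
          insert i (Finset.filter (fun j => P j = true) (Finset.range (2 * m))) := by
        ext j
        simp only [Finset.mem_insert, Finset.mem_filter]
        constructor
        · intro ⟨hj, hQj⟩
          by_cases hji : j = i
          · exact Or.inl hji
          · exact Or.inr ⟨hj, (hsame j hj hji) ▸ hQj⟩
        · rintro (rfl | ⟨hj, hPj⟩)
          · exact ⟨hiin, hQitrue⟩
          · have hji : j ≠ i := by rintro rfl; exact hPi hPj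
            exact ⟨hj, (hsame j hj hji).symm ▸ hPj⟩
      have hinot : i ∉ Finset.filter (fun j => P j = true) (Finset.range (2 * m)) := by
        simp [hPi]
      rw [heq, Finset.card_insert_of_notMem hinot]
      omega
  exact ⟨part1.trans hR, ⟨i, hi2m, hQne⟩, part3, part4⟩
end
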